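/- arXiv:2311.14051 — 2 statements merged into one kernel-verified Lean document; each statement's English description precedes it below -/
import Mathlib

section
/- Let u(x,t) = ∫_{ℝⁿ} (4πt)^{-n/2} exp(-|x-ξ|²/(4t)) dμ(ξ) be a nonnegative heat extension of a Radon measure μ on ℝⁿ and let α ∈ [0,n]. Then the set T_α(u) = { x ∈ ℝⁿ : limsup_{t→0⁺} t^{α/2} u(x,t) > 0 } has Hausdorff dimension at most n − α. -/
/-!
If the upper `(n - α)`-density `limsup_{r → 0} μ(B(x, r)) / r^(n - α)` of `μ` vanishes at `x`,
then `t^(α/2) u(x, t) → 0`: on the annulus `k√t ≤ |x - ξ| ≤ (k + 1)√t` the kernel is at most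
`(4πt)^(-n/2) e^(-k²/4)` while the annulus has measure `o(((k + 1)√t)^(n - α))`, and away from
`x` the kernel at time `t ≤ 1` is `O(t^(-n/2) e^(-R²/(8t)))` times the kernel at time `2`, whose
integral is finite. Hence `T_α(u)` lies in the set where `μ(B(x, r)) ≥ c r^(n - α)` for arbitrarily
small `r`; a Vitali covering by such balls bounds the `(n - α)`-dimensional Hausdorff measure of
each bounded piece of this set by a multiple of the `μ`-measure of a ball, which is finite.
-/

open MeasureTheory Filter Metric Set

noncomputable def heatK (n : ℕ) (x : EuclideanSpace ℝ (Fin n)) (t : ℝ) : ℝ :=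
  (4 * Real.pi * t) ^ (-(n : ℝ) / 2) * Real.exp (-‖x‖ ^ 2 / (4 * t))

open scoped ENNReal NNReal Topology

open TopologicalSpace

theorem dimH_le_of_forall_exists_nhdsWithin {X : Type*} [EMetricSpace X]
    [SecondCountableTopology X] {s : Set X}
    {d : ℝ≥0∞} (h : ∀ x ∈ s, ∃ t ∈ 𝓝[s] x, dimH t ≤ d) : dimH s ≤ d := by
  by_contra! hlt
  obtain ⟨x, hx, hbig⟩ := exists_mem_nhdsWithin_lt_dimH_of_lt_dimH hlt
  obtain ⟨t, ht, htd⟩ := h x hx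
  exact (hbig t ht).not_ge htd

section Density

variable {X : Type*} [MetricSpace X] [MeasurableSpace X] [BorelSpace X]

theorem exists_countable_disjoint_closedBall_cover [SeparableSpace X] {ν : Measure X} {d : ℝ}
    {K : ℝ≥0∞} {A U : Set X} (hU : IsOpen U) (hAU : A ⊆ U)
    (hA : ∀ x ∈ A, ∃ᶠ r in 𝓝[>] 0, ENNReal.ofReal (r ^ d) ≤ K * ν (closedBall x r))
    {δ : ℝ} (hδ : 0 < δ) :
    ∃ (u : Set X) (ρ : X → ℝ), u.Countable ∧ (∀ b ∈ u, 0 < ρ b ∧ ρ b < δ) ∧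
      A ⊆ ⋃ b ∈ u, closedBall b (4 * ρ b) ∧
      ∑' b : u, ENNReal.ofReal (ρ b ^ d) ≤ K * ν U := by
  have hradius : ∀ x ∈ A, ∃ r, (0 < r ∧ r < δ) ∧ closedBall x r ⊆ U ∧
      ENNReal.ofReal (r ^ d) ≤ K * ν (closedBall x r) := by
    intro x hx
    obtain ⟨ε, hε, hεU⟩ := Metric.isOpen_iff.1 hU x (hAU hx)
    have hsmall : ∀ᶠ r in 𝓝[>] (0 : ℝ), r ∈ Ioo 0 (min δ ε) :=
      Ioo_mem_nhdsGT (lt_min hδ hε)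
    obtain ⟨r, hr, hrν⟩ := (hsmall.and_frequently (hA x hx)).exists
    exact ⟨r, ⟨hr.1, hr.2.trans_le (min_le_left _ _)⟩,
      (closedBall_subset_ball (hr.2.trans_le (min_le_right _ _))).trans hεU, hrν⟩
  choose! ρ hρ hρU hρν using hradius
  obtain ⟨u, huA, hdisj, hcover⟩ :=
    Vitali.exists_disjoint_subfamily_covering_enlargement_closedBall A id ρ δ
      (fun x hx => (hρ x hx).2.le) 4 (by norm_num)
  have hu : u.Countable :=
    (hdisj.mono fun _ => ball_subset_closedBall).countable_of_isOpen (fun _ _ => isOpen_ball)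
      fun b hb => nonempty_ball.2 (hρ b (huA hb)).1
  refine ⟨u, ρ, hu, fun b hb => hρ b (huA hb), fun x hx => ?_, ?_⟩
  · obtain ⟨b, hb, hxb⟩ := hcover x hx
    exact mem_biUnion hb (hxb (mem_closedBall_self (hρ x hx).1.le))
  · have := hu.to_subtype
    calc ∑' b : u, ENNReal.ofReal (ρ b ^ d)
        ≤ ∑' b : u, K * ν (closedBall b (ρ b)) :=
          ENNReal.tsum_le_tsum fun b => hρν b (huA b.2)
      _ = K * ν (⋃ b ∈ u, closedBall b (ρ b)) := by
          rw [ENNReal.tsum_mul_left]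
          exact congrArg (K * ·)
            (measure_biUnion hu hdisj fun _ _ => measurableSet_closedBall).symm
      _ ≤ K * ν U := by
          gcongr
          exact iUnion₂_subset fun b hb => hρU b (huA hb)

theorem hausdorffMeasure_le_of_frequently_rpow_le [SeparableSpace X] {ν : Measure X} {d : ℝ}
    (hd : 0 ≤ d) {K : ℝ≥0∞} {A U : Set X} (hU : IsOpen U) (hAU : A ⊆ U)
    (hA : ∀ x ∈ A, ∃ᶠ r in 𝓝[>] 0, ENNReal.ofReal (r ^ d) ≤ K * ν (closedBall x r)) :
    μH[d] A ≤ 8 ^ d * (K * ν U) := by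
  have hcovers := fun k : ℕ =>
    exists_countable_disjoint_closedBall_cover hU hAU hA (Nat.one_div_pos_of_nat (n := k))
  choose u ρ hu hρ hcover hsum using hcovers
  have := fun k => (hu k).to_subtype
  have hdiam : ∀ k, ∀ b : u k, ediam (closedBall (b : X) (4 * ρ k b)) ≤
      ENNReal.ofReal (8 * ρ k b) :=
    fun k b => ediam_le_of_forall_dist_le fun y hy z hz => by
      linarith [dist_triangle_right y z b, mem_closedBall.1 hy, mem_closedBall.1 hz]
  have hbound : ∀ k, ∑' b : u k, ediam (closedBall (b : X) (4 * ρ k b)) ^ d ≤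
      8 ^ d * (K * ν U) := fun k =>
    calc ∑' b : u k, ediam (closedBall (b : X) (4 * ρ k b)) ^ d
        ≤ ∑' b : u k, 8 ^ d * ENNReal.ofReal (ρ k b ^ d) := by
          refine ENNReal.tsum_le_tsum fun b => (ENNReal.rpow_le_rpow (hdiam k b) hd).trans_eq ?_
          rw [ENNReal.ofReal_mul (by norm_num), ENNReal.mul_rpow_of_nonneg _ _ hd,
            ENNReal.ofReal_rpow_of_nonneg (hρ k b b.2).1.le hd, ENNReal.ofReal_ofNat]
      _ ≤ 8 ^ d * (K * ν U) := by
          rw [ENNReal.tsum_mul_left]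
          gcongr
          exact hsum k
  have hscale : Tendsto (fun k : ℕ => ENNReal.ofReal (8 * (1 / ((k : ℝ) + 1)))) atTop (𝓝 0) := by
    simpa using ENNReal.tendsto_ofReal
      ((tendsto_one_div_add_atTop_nhds_zero_nat).const_mul (8 : ℝ))
  refine (Measure.hausdorffMeasure_le_liminf_tsum d A _ hscale
    (fun k (b : u k) => closedBall b (4 * ρ k b))
    (Eventually.of_forall fun k b => (hdiam k b).trans (ENNReal.ofReal_le_ofReal
      (by linarith [(hρ k b b.2).2])))
    (Eventually.of_forall fun k x hx => ?_)).trans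
    (liminf_le_of_frequently_le' (Frequently.of_forall hbound))
  obtain ⟨b, hb, hxb⟩ := mem_iUnion₂.1 (hcover k hx)
  exact mem_iUnion.2 ⟨⟨b, hb⟩, hxb⟩

theorem dimH_setOf_frequently_le_measure_closedBall [ProperSpace X] (ν : Measure X)
    [IsFiniteMeasureOnCompacts ν] {d : ℝ} (hd : 0 ≤ d) :
    dimH {x | ∃ c ≠ 0, ∃ᶠ r in 𝓝[>] 0, c * ENNReal.ofReal (r ^ d) ≤ ν (closedBall x r)} ≤
      ENNReal.ofReal d := by
  set E : ℕ → Set X :=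
    fun m => {x | ∃ᶠ r in 𝓝[>] 0, ENNReal.ofReal (r ^ d) ≤ m * ν (closedBall x r)}
  have hcover : {x | ∃ c ≠ 0, ∃ᶠ r in 𝓝[>] 0, c * ENNReal.ofReal (r ^ d) ≤ ν (closedBall x r)}
      ⊆ ⋃ m, E m := by
    rintro x ⟨c, hc, hfreq⟩
    obtain ⟨m, hm⟩ := ENNReal.exists_inv_nat_lt hc
    have hm0 : (m : ℝ≥0∞) ≠ 0 := by rintro h; simp [h] at hm
    refine mem_iUnion.2 ⟨m, hfreq.mono fun r hr => ?_⟩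
    calc ENNReal.ofReal (r ^ d) = m * ((m : ℝ≥0∞)⁻¹ * ENNReal.ofReal (r ^ d)) := by
          rw [← mul_assoc, ENNReal.mul_inv_cancel hm0 (ENNReal.natCast_ne_top m), one_mul]
      _ ≤ m * ν (closedBall x r) := by gcongr; exact (mul_le_mul_left hm.le _).trans hr
  refine (dimH_mono hcover).trans ?_
  rw [dimH_iUnion]
  refine iSup_le fun m => dimH_le_of_forall_exists_nhdsWithin fun x _ =>
    ⟨E m ∩ ball x 1, inter_mem_nhdsWithin _ (ball_mem_nhds x one_pos), ?_⟩
  apply dimH_le_of_hausdorffMeasure_ne_top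
  rw [Real.coe_toNNReal d hd]
  refine ne_top_of_le_ne_top ?_ (hausdorffMeasure_le_of_frequently_rpow_le hd isOpen_ball
    inter_subset_right fun y hy => hy.1)
  refine ENNReal.mul_ne_top (ENNReal.rpow_ne_top_of_nonneg hd (by simp))
    (ENNReal.mul_ne_top (ENNReal.natCast_ne_top m) ?_)
  exact ne_top_of_le_ne_top (measure_closedBall_lt_top (x := x) (r := 1)).ne
    (measure_mono ball_subset_closedBall)

end Density

open Real

theorem tendsto_rpow_mul_exp_neg_div_nhdsGT_zero (a : ℝ) {b : ℝ} (hb : 0 < b) :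
    Tendsto (fun t : ℝ => t ^ a * exp (-b / t)) (𝓝[>] 0) (𝓝 0) := by
  refine ((tendsto_rpow_mul_exp_neg_mul_atTop_nhds_zero (-a) b hb).comp
    tendsto_inv_nhdsGT_zero).congr' ?_
  filter_upwards [self_mem_nhdsWithin] with t (ht : 0 < t)
  simp only [Function.comp, inv_rpow ht.le, rpow_neg ht.le, inv_inv, div_eq_mul_inv]

noncomputable def gaussianRingSum (d : ℝ) : ℝ≥0∞ :=
  ∑' k : ℕ, ENNReal.ofReal (exp (-(k : ℝ) ^ 2 / 4) * ((k : ℝ) + 1) ^ d)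

theorem gaussianRingSum_ne_top (d : ℝ) : gaussianRingSum d ≠ ⊤ := by
  set N := ⌈d⌉₊
  have hgeom : Summable fun k : ℕ => ((k : ℝ) + 1) ^ N * exp (-(1 / 4) * (k : ℝ)) := by
    have := ((summable_nat_add_iff 1).2 (summable_pow_mul_exp_neg_nat_mul N
      (by norm_num : (0 : ℝ) < 1 / 4))).mul_right (exp (1 / 4))
    refine this.congr fun k => ?_
    push_cast
    rw [mul_assoc, ← exp_add]
    ring_nf
  have hsum : Summable fun k : ℕ => exp (-(k : ℝ) ^ 2 / 4) * ((k : ℝ) + 1) ^ d := by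
    refine hgeom.of_nonneg_of_le (fun k => by positivity) fun k => ?_
    have hk : (k : ℝ) ≤ (k : ℝ) ^ 2 := by
      rcases k.eq_zero_or_pos with rfl | hk
      · simp
      · nlinarith [(Nat.one_le_cast (α := ℝ)).2 hk]
    rw [mul_comm, ← rpow_natCast ((k : ℝ) + 1)]
    gcongr ?_ * exp ?_
    · exact rpow_le_rpow_of_exponent_le (by linarith [k.cast_nonneg (α := ℝ)]) (Nat.le_ceil d)
    · linarith
  rw [gaussianRingSum, ← ENNReal.ofReal_tsum_of_nonneg (fun k => by positivity) hsum]
  exact ENNReal.ofReal_ne_top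

section HeatKernel

variable {n : ℕ}

theorem heatK_le_of_le_norm {y : EuclideanSpace ℝ (Fin n)} {t ρ : ℝ} (ht : 0 < t)
    (hρ : 0 ≤ ρ) (hy : ρ ≤ ‖y‖) :
    heatK n y t ≤ (4 * π * t) ^ (-(n : ℝ) / 2) * exp (-ρ ^ 2 / (4 * t)) := by
  unfold heatK
  gcongr

theorem le_heatK_of_norm_le {y : EuclideanSpace ℝ (Fin n)} {t ρ : ℝ} (ht : 0 < t)
    (hy : ‖y‖ ≤ ρ) :
    (4 * π * t) ^ (-(n : ℝ) / 2) * exp (-ρ ^ 2 / (4 * t)) ≤ heatK n y t := by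
  unfold heatK
  gcongr

theorem heatK_le_mul_heatK_two {y : EuclideanSpace ℝ (Fin n)} {t R : ℝ} (ht : 0 < t)
    (ht1 : t ≤ 1) (hR : 0 ≤ R) (hy : R ≤ ‖y‖) :
    heatK n y t ≤ (t / 2) ^ (-(n : ℝ) / 2) * exp (-R ^ 2 / (8 * t)) * heatK n y 2 := by
  have hprefactor : (t / 2) ^ (-(n : ℝ) / 2) * (4 * π * 2) ^ (-(n : ℝ) / 2) =
      (4 * π * t) ^ (-(n : ℝ) / 2) := by
    rw [← mul_rpow (by positivity) (by positivity)]
    ring_nf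
  have hRy : R ^ 2 / (8 * t) ≤ ‖y‖ ^ 2 / (8 * t) := by gcongr
  have hty : ‖y‖ ^ 2 / 8 ≤ ‖y‖ ^ 2 / (8 * t) := by
    gcongr
    linarith
  have hsplit : -‖y‖ ^ 2 / (4 * t) = -(‖y‖ ^ 2 / (8 * t)) - ‖y‖ ^ 2 / (8 * t) := by
    field_simp
    ring
  unfold heatK
  rw [mul_mul_mul_comm, hprefactor, ← exp_add]
  gcongr
  rw [hsplit, neg_div, neg_div, show (4 : ℝ) * 2 = 8 by norm_num]
  linarith

noncomputable def heatExtension (μ : Measure (EuclideanSpace ℝ (Fin n)))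
    (x : EuclideanSpace ℝ (Fin n)) (t : ℝ) : ℝ≥0∞ :=
  ∫⁻ ξ, ENNReal.ofReal (heatK n (x - ξ) t) ∂μ

variable {μ : Measure (EuclideanSpace ℝ (Fin n))} {x : EuclideanSpace ℝ (Fin n)}

theorem measure_closedBall_ne_top_of_heatExtension_ne_top {t : ℝ} (ht : 0 < t)
    (hu : heatExtension μ x t ≠ ⊤) (ρ : ℝ) : μ (closedBall x ρ) ≠ ⊤ := by
  set κ := (4 * π * t) ^ (-(n : ℝ) / 2) * exp (-ρ ^ 2 / (4 * t))
  have hκ : ENNReal.ofReal κ ≠ 0 := (ENNReal.ofReal_pos.2 (by positivity)).ne'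
  have hle : ENNReal.ofReal κ * μ (closedBall x ρ) ≤ heatExtension μ x t :=
    calc ENNReal.ofReal κ * μ (closedBall x ρ)
        = ∫⁻ _ in closedBall x ρ, ENNReal.ofReal κ ∂μ := (setLIntegral_const _ _).symm
      _ ≤ ∫⁻ ξ in closedBall x ρ, ENNReal.ofReal (heatK n (x - ξ) t) ∂μ :=
          setLIntegral_mono' measurableSet_closedBall fun ξ hξ => ENNReal.ofReal_le_ofReal
            (le_heatK_of_norm_le ht (by rwa [← dist_eq_norm, ← mem_closedBall']))
      _ ≤ heatExtension μ x t := setLIntegral_le_lintegral _ _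
  intro htop
  rw [htop, ENNReal.mul_top hκ] at hle
  exact hu (top_le_iff.1 hle)

theorem isFiniteMeasureOnCompacts_of_heatExtension_ne_top {t : ℝ} (ht : 0 < t)
    (hu : heatExtension μ x t ≠ ⊤) : IsFiniteMeasureOnCompacts μ where
  lt_top_of_isCompact _ hK :=
    let ⟨_, hR⟩ := hK.isBounded.subset_closedBall x
    (measure_mono hR).trans_lt (measure_closedBall_ne_top_of_heatExtension_ne_top ht hu _).lt_top

theorem setLIntegral_compl_closedBall_heatK_le {t R : ℝ} (ht : 0 < t) (ht1 : t ≤ 1)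
    (hR : 0 ≤ R) :
    ∫⁻ ξ in (closedBall x R)ᶜ, ENNReal.ofReal (heatK n (x - ξ) t) ∂μ ≤
      ENNReal.ofReal ((t / 2) ^ (-(n : ℝ) / 2) * exp (-R ^ 2 / (8 * t))) *
        heatExtension μ x 2 := by
  have hpoint : ∀ ξ ∈ (closedBall x R)ᶜ, ENNReal.ofReal (heatK n (x - ξ) t) ≤
      ENNReal.ofReal ((t / 2) ^ (-(n : ℝ) / 2) * exp (-R ^ 2 / (8 * t))) *
        ENNReal.ofReal (heatK n (x - ξ) 2) := fun ξ hξ => by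
    rw [← ENNReal.ofReal_mul (by positivity)]
    refine ENNReal.ofReal_le_ofReal (heatK_le_mul_heatK_two ht ht1 hR ?_)
    rw [← dist_eq_norm]
    exact (not_le.1 fun h => hξ (mem_closedBall'.2 h)).le
  calc ∫⁻ ξ in (closedBall x R)ᶜ, ENNReal.ofReal (heatK n (x - ξ) t) ∂μ
      ≤ ∫⁻ ξ in (closedBall x R)ᶜ,
          ENNReal.ofReal ((t / 2) ^ (-(n : ℝ) / 2) * exp (-R ^ 2 / (8 * t))) *
            ENNReal.ofReal (heatK n (x - ξ) 2) ∂μ :=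
        setLIntegral_mono' measurableSet_closedBall.compl hpoint
    _ ≤ _ := by
        rw [lintegral_const_mul' _ _ ENNReal.ofReal_ne_top]
        exact mul_le_mul_right (setLIntegral_le_lintegral _ _) _

theorem setLIntegral_annulus_heatK_le {d : ℝ} (hd : 0 ≤ d) {ε : ℝ≥0∞} {R t : ℝ} (ht : 0 < t)
    (hR : 0 < R) (hball : ∀ r ∈ Ioc 0 R, μ (closedBall x r) ≤ ε * ENNReal.ofReal (r ^ d))
    (k : ℕ) :
    ∫⁻ ξ in closedBall x (min R ((k + 1) * √t)) \ ball x (k * √t),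
        ENNReal.ofReal (heatK n (x - ξ) t) ∂μ ≤
      ENNReal.ofReal ((4 * π * t) ^ (-(n : ℝ) / 2) * t ^ (d / 2)) * ε *
        ENNReal.ofReal (exp (-(k : ℝ) ^ 2 / 4) * ((k : ℝ) + 1) ^ d) := by
  have hs : 0 < √t := sqrt_pos.2 ht
  have hkernel : ∀ ξ ∈ closedBall x (min R ((k + 1) * √t)) \ ball x (k * √t),
      heatK n (x - ξ) t ≤ (4 * π * t) ^ (-(n : ℝ) / 2) * exp (-(k : ℝ) ^ 2 / 4) := by
    intro ξ hξ
    have hfar : (k : ℝ) * √t ≤ ‖x - ξ‖ := by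
      rw [← dist_eq_norm, dist_comm]
      exact not_lt.1 fun h => hξ.2 (mem_ball.2 h)
    convert heatK_le_of_le_norm ht (by positivity) hfar using 3
    rw [mul_pow, sq_sqrt ht.le]
    field_simp
  have hmeasure : μ (closedBall x (min R ((k + 1) * √t))) ≤
      ε * ENNReal.ofReal (((k : ℝ) + 1) ^ d * t ^ (d / 2)) := by
    have hmin : 0 < min R ((k + 1) * √t) := lt_min hR (by positivity)
    refine (hball _ ⟨hmin, min_le_left _ _⟩).trans ?_
    gcongr
    calc min R ((k + 1) * √t) ^ d ≤ ((k + 1) * √t) ^ d := by gcongr; exact min_le_right _ _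
      _ = ((k : ℝ) + 1) ^ d * t ^ (d / 2) := by
        rw [mul_rpow (by positivity) hs.le, sqrt_eq_rpow, ← rpow_mul ht.le]
        ring_nf
  calc ∫⁻ ξ in closedBall x (min R ((k + 1) * √t)) \ ball x (k * √t),
        ENNReal.ofReal (heatK n (x - ξ) t) ∂μ
      ≤ ∫⁻ _ in closedBall x (min R ((k + 1) * √t)) \ ball x (k * √t),
          ENNReal.ofReal ((4 * π * t) ^ (-(n : ℝ) / 2) * exp (-(k : ℝ) ^ 2 / 4)) ∂μ :=
        setLIntegral_mono' (measurableSet_closedBall.diff measurableSet_ball)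
          fun ξ hξ => ENNReal.ofReal_le_ofReal (hkernel ξ hξ)
    _ ≤ ENNReal.ofReal ((4 * π * t) ^ (-(n : ℝ) / 2) * exp (-(k : ℝ) ^ 2 / 4)) *
          (ε * ENNReal.ofReal (((k : ℝ) + 1) ^ d * t ^ (d / 2))) := by
        rw [setLIntegral_const]
        exact mul_le_mul_right (measure_mono sdiff_subset |>.trans hmeasure) _
    _ = _ := by
        have hprefactor : (0 : ℝ) ≤ (4 * π * t) ^ (-(n : ℝ) / 2) := by positivity
        rw [ENNReal.ofReal_mul hprefactor, ENNReal.ofReal_mul hprefactor,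
          ENNReal.ofReal_mul (by positivity), ENNReal.ofReal_mul (by positivity)]
        ring

theorem setLIntegral_closedBall_heatK_le {d : ℝ} (hd : 0 ≤ d) {ε : ℝ≥0∞} {R t : ℝ} (ht : 0 < t)
    (hR : 0 < R) (hball : ∀ r ∈ Ioc 0 R, μ (closedBall x r) ≤ ε * ENNReal.ofReal (r ^ d)) :
    ∫⁻ ξ in closedBall x R, ENNReal.ofReal (heatK n (x - ξ) t) ∂μ ≤
      ENNReal.ofReal ((4 * π * t) ^ (-(n : ℝ) / 2) * t ^ (d / 2)) * ε * gaussianRingSum d := by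
  have hcover : closedBall x R ⊆
      ⋃ k : ℕ, closedBall x (min R ((k + 1) * √t)) \ ball x (k * √t) := by
    intro ξ hξ
    have hs : 0 < √t := sqrt_pos.2 ht
    set k := ⌊dist ξ x / √t⌋₊
    have hlow : (k : ℝ) * √t ≤ dist ξ x :=
      (le_div_iff₀ hs).1 (Nat.floor_le (by positivity))
    have hhigh : dist ξ x < (k + 1) * √t := (div_lt_iff₀ hs).1 (Nat.lt_floor_add_one _)
    exact mem_iUnion.2 ⟨k, mem_closedBall.2 (le_min (mem_closedBall.1 hξ) hhigh.le),
      fun h => (mem_ball.1 h).not_ge hlow⟩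
  calc ∫⁻ ξ in closedBall x R, ENNReal.ofReal (heatK n (x - ξ) t) ∂μ
      ≤ ∑' k : ℕ, ∫⁻ ξ in closedBall x (min R ((k + 1) * √t)) \ ball x (k * √t),
          ENNReal.ofReal (heatK n (x - ξ) t) ∂μ :=
        (lintegral_mono_set hcover).trans (lintegral_iUnion_le _ _)
    _ ≤ _ := by
        rw [gaussianRingSum, ← ENNReal.tsum_mul_left]
        exact ENNReal.tsum_le_tsum (setLIntegral_annulus_heatK_le hd ht hR hball)

theorem tendsto_rpow_mul_heatExtension_nhdsGT_zero {α : ℝ} (hαn : α ≤ n)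
    (hu : heatExtension μ x 2 ≠ ⊤)
    (hx : ∀ ε ≠ 0, ∀ᶠ r in 𝓝[>] 0,
      μ (closedBall x r) ≤ ε * ENNReal.ofReal (r ^ ((n : ℝ) - α))) :
    Tendsto (fun t => ENNReal.ofReal (t ^ (α / 2)) * heatExtension μ x t) (𝓝[>] 0) (𝓝 0) := by
  set D := ENNReal.ofReal ((4 * π) ^ (-(n : ℝ) / 2)) * gaussianRingSum ((n : ℝ) - α)
  have hD : D ≠ ⊤ := ENNReal.mul_ne_top ENNReal.ofReal_ne_top (gaussianRingSum_ne_top _)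
  rw [ENNReal.tendsto_nhds_zero]
  intro c hc
  have hc2 : 0 < c / 2 := ENNReal.half_pos hc.ne'
  set ε := c / 2 / D
  obtain ⟨R, hR : 0 < R, hRball⟩ := mem_nhdsGT_iff_exists_Ioc_subset.1
    (hx ε (ENNReal.div_pos hc2.ne' hD).ne')
  have hfar : Tendsto (fun t => ENNReal.ofReal (t ^ (α / 2) *
      ((t / 2) ^ (-(n : ℝ) / 2) * exp (-R ^ 2 / (8 * t)))) * heatExtension μ x 2)
      (𝓝[>] 0) (𝓝 0) := by
    have hreal : Tendsto (fun t => t ^ (α / 2) *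
        ((t / 2) ^ (-(n : ℝ) / 2) * exp (-R ^ 2 / (8 * t)))) (𝓝[>] 0) (𝓝 0) := by
      have h := (tendsto_rpow_mul_exp_neg_div_nhdsGT_zero ((α - n) / 2)
        (by positivity : 0 < R ^ 2 / 8)).const_mul (2 ^ ((n : ℝ) / 2))
      rw [mul_zero] at h
      refine h.congr' ?_
      filter_upwards [self_mem_nhdsWithin] with t (ht : 0 < t)
      have htpow : t ^ ((α - n) / 2) = t ^ (α / 2) * t ^ (-(n : ℝ) / 2) := by
        rw [← rpow_add ht]
        ring_nf
      have htwo : (2 : ℝ) ^ (-(n : ℝ) / 2) = (2 ^ ((n : ℝ) / 2))⁻¹ := by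
        rw [neg_div, rpow_neg zero_le_two]
      rw [div_rpow ht.le zero_le_two, htwo, htpow, show -(R ^ 2 / 8) / t = -R ^ 2 / (8 * t) by ring]
      field_simp
    simpa using ENNReal.Tendsto.mul_const (ENNReal.tendsto_ofReal hreal) (Or.inr hu)
  filter_upwards [Ioo_mem_nhdsGT one_pos, hfar.eventually (Iic_mem_nhds hc2)]
    with t ⟨ht, ht1⟩ hfar_t
  rw [heatExtension, ← lintegral_add_compl _ (measurableSet_closedBall (x := x) (ε := R)),
    mul_add, ← ENNReal.add_halves c]
  gcongr ?_ + ?_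
  · have hscale : t ^ (α / 2) * ((4 * π * t) ^ (-(n : ℝ) / 2) * t ^ (((n : ℝ) - α) / 2)) =
        (4 * π) ^ (-(n : ℝ) / 2) := by
      have htpow : t ^ (α / 2) * t ^ (-(n : ℝ) / 2) * t ^ (((n : ℝ) - α) / 2) = 1 := by
        rw [← rpow_add ht, ← rpow_add ht, ← rpow_zero t]
        ring_nf
      rw [mul_rpow (by positivity) ht.le]
      linear_combination (4 * π) ^ (-(n : ℝ) / 2) * htpow
    calc ENNReal.ofReal (t ^ (α / 2)) *
          ∫⁻ ξ in closedBall x R, ENNReal.ofReal (heatK n (x - ξ) t) ∂μ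
        ≤ ENNReal.ofReal (t ^ (α / 2)) * (ENNReal.ofReal ((4 * π * t) ^ (-(n : ℝ) / 2) *
            t ^ (((n : ℝ) - α) / 2)) * ε * gaussianRingSum ((n : ℝ) - α)) := by
          gcongr
          exact setLIntegral_closedBall_heatK_le (sub_nonneg.2 hαn) ht hR
            fun r hr => hRball hr
      _ = D * ε := by
          rw [← mul_assoc, ← mul_assoc, ← ENNReal.ofReal_mul (by positivity), hscale]
          ring
      _ ≤ c / 2 := ENNReal.mul_div_le
  · calc ENNReal.ofReal (t ^ (α / 2)) *
          ∫⁻ ξ in (closedBall x R)ᶜ, ENNReal.ofReal (heatK n (x - ξ) t) ∂μ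
        ≤ ENNReal.ofReal (t ^ (α / 2)) * (ENNReal.ofReal ((t / 2) ^ (-(n : ℝ) / 2) *
            exp (-R ^ 2 / (8 * t))) * heatExtension μ x 2) := by
          gcongr
          exact setLIntegral_compl_closedBall_heatK_le ht ht1.le hR.le
      _ ≤ c / 2 := by
          rw [← mul_assoc, ← ENNReal.ofReal_mul (by positivity)]
          exact hfar_t

end HeatKernel

theorem stmt5 (n : ℕ) (α : ℝ) (hα : α ∈ Icc (0 : ℝ) n)
    (μ : Measure (EuclideanSpace ℝ (Fin n)))
    (hfin : ∀ (x : EuclideanSpace ℝ (Fin n)) (t : ℝ), 0 < t →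
      (∫⁻ ξ, ENNReal.ofReal (heatK n (x - ξ) t) ∂μ) ≠ ⊤) :
    dimH {x : EuclideanSpace ℝ (Fin n) |
        0 < limsup (fun t : ℝ =>
            ENNReal.ofReal (t ^ (α / 2)) *
              ∫⁻ ξ, ENNReal.ofReal (heatK n (x - ξ) t) ∂μ)
          (nhdsWithin 0 (Ioi 0))} ≤ ENNReal.ofReal ((n : ℝ) - α) := by
  have := isFiniteMeasureOnCompacts_of_heatExtension_ne_top one_pos (hfin 0 1 one_pos)
  refine (dimH_mono fun x hx => ?_).trans
    (dimH_setOf_frequently_le_measure_closedBall μ (sub_nonneg.2 hα.2))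
  by_contra hdensity
  simp only [mem_ofPred_eq, not_exists, not_and, not_frequently, not_le] at hdensity
  have hlim := tendsto_rpow_mul_heatExtension_nhdsGT_zero hα.2 (hfin x 2 two_pos)
    fun ε hε => (hdensity ε hε).mono fun r hr => hr.le
  exact hx.ne' hlim.limsup_eq
end

section
/- Let α ∈ (0,n), k ∈ ℕ, and let μ be a Radon measure on ℝⁿ with finite heat extension u. Set S^k = { x ∈ B(0,R) : limsup_{t→0⁺} t^{α/2} u(x,t) > k } for fixed R > 0. Then H^{n-α}(S^k) ≤ C(α,n) · μ(B(0,R+1)) / k, where C(α,n) depends only on α and n. -/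
/-!
If `μ(B(x,r)) ≤ λ r^{n-α}` for all `r ≤ δ`, cutting `B(x,δ)` into shells of width `√t` around `x`
gives `t^{α/2} ∫_{B(x,δ)} Φ_t(x-ξ) dμ(ξ) ≤ λ c_n` for the heat kernel `Φ_t`, while off `B(x,δ)` the
ratio `t^{α/2} Φ_t / Φ_1` tends to `0` uniformly, so `limsup t^{α/2} u(x,t) ≤ λ c_n`. Hence at a
point of `S^k` there are arbitrarily small balls with `r^{n-α} ≤ (c_n/k) μ(B(x,r))`, and a Vitali
`5r`-covering by such balls gives the Hausdorff bound.
-/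

open MeasureTheory Filter Metric Set ENNReal Topology

theorem exists_countable_disjoint_balls_cover {X : Type*} [PseudoMetricSpace X]
    [TopologicalSpace.SeparableSpace X] (s : Set X) (r : X → ℝ) {δ : ℝ}
    (hr : ∀ x ∈ s, r x ∈ Ioc 0 δ) :
    ∃ u ⊆ s, u.Countable ∧ u.PairwiseDisjoint (fun x => ball x (r x)) ∧
      s ⊆ ⋃ x ∈ u, closedBall x (5 * r x) := by
  obtain ⟨u, hus, hdisj, hcover⟩ :=
    Vitali.exists_disjoint_subfamily_covering_enlargement_closedBall s id r δ
      (fun x hx => (hr x hx).2) 5 (by norm_num)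
  have hdisj' : u.PairwiseDisjoint (fun x => ball x (r x)) :=
    hdisj.mono fun _ => ball_subset_closedBall
  refine ⟨u, hus, hdisj'.countable_of_isOpen (fun _ _ => isOpen_ball)
    (fun x hx => nonempty_ball.2 (hr x (hus hx)).1), hdisj', fun x hx => ?_⟩
  obtain ⟨b, hb, hsub⟩ := hcover x hx
  exact mem_biUnion hb (hsub (mem_closedBall_self (hr x hx).1.le))

theorem ediam_closedBall_le_ofReal {X : Type*} [PseudoMetricSpace X] (x : X) {r : ℝ}
    (hr : 0 ≤ r) : ediam (closedBall x r) ≤ ENNReal.ofReal (2 * r) := by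
  rw [← closedEBall_ofReal hr, ENNReal.ofReal_mul zero_le_two, ENNReal.ofReal_ofNat]
  exact ediam_closedEBall_le

theorem tsum_ediam_closedBall_rpow_le {X : Type*} [PseudoMetricSpace X] [MeasurableSpace X]
    [OpensMeasurableSpace X] (μ : Measure X) {d : ℝ} (hd : 0 ≤ d) {C : ℝ≥0∞} {u : Set X}
    (hu : u.Countable) {r : X → ℝ} {η : ℝ} (hr : ∀ x ∈ u, r x ∈ Ioc 0 η)
    (hdisj : u.PairwiseDisjoint fun x => ball x (r x))
    (hμ : ∀ x ∈ u, ENNReal.ofReal (r x) ^ d ≤ C * μ (ball x (r x))) :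
    ∑' x : u, ediam (closedBall (x : X) (5 * r x)) ^ d ≤ 10 ^ d * C * μ (thickening η u) := by
  calc ∑' x : u, ediam (closedBall (x : X) (5 * r x)) ^ d
      ≤ ∑' x : u, 10 ^ d * (C * μ (ball (x : X) (r x))) := by
        refine ENNReal.tsum_le_tsum fun x => ?_
        have hx0 := (hr x x.2).1.le
        calc ediam (closedBall (x : X) (5 * r x)) ^ d
            ≤ ENNReal.ofReal (2 * (5 * r x)) ^ d :=
              ENNReal.rpow_le_rpow (ediam_closedBall_le_ofReal _ (by positivity)) hd
          _ = 10 ^ d * ENNReal.ofReal (r x) ^ d := by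
              rw [← mul_assoc, ENNReal.ofReal_mul (by norm_num),
                ENNReal.mul_rpow_of_nonneg _ _ hd]
              norm_num
          _ ≤ 10 ^ d * (C * μ (ball (x : X) (r x))) := by
              grw [hμ x x.2]
    _ = 10 ^ d * C * μ (⋃ x ∈ u, ball x (r x)) := by
        rw [measure_biUnion hu hdisj fun _ _ => measurableSet_ball,
          ENNReal.tsum_mul_left, ENNReal.tsum_mul_left, mul_assoc]
    _ ≤ 10 ^ d * C * μ (thickening η u) := by
        refine mul_le_mul_right (measure_mono (iUnion₂_subset fun x hx => ?_)) _
        exact (ball_subset_thickening hx _).trans (thickening_mono (hr x hx).2 u)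

theorem hausdorffMeasure_le_mul_measure_thickening {X : Type*} [MetricSpace X]
    [TopologicalSpace.SeparableSpace X] [MeasurableSpace X] [BorelSpace X] (μ : Measure X)
    {d : ℝ} (hd : 0 ≤ d) {C : ℝ≥0∞} {s : Set X} {η : ℝ} (hη : 0 < η)
    (h : ∀ x ∈ s, ∀ δ > 0, ∃ r ∈ Ioc 0 δ, ENNReal.ofReal r ^ d ≤ C * μ (ball x r)) :
    μH[d] s ≤ 10 ^ d * C * μ (thickening η s) := by
  set δ : ℕ → ℝ := fun m => min η (1 / (m + 1))
  have hδ (m : ℕ) : 0 < δ m := lt_min hη Nat.one_div_pos_of_nat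
  have hδ_lim : Tendsto δ atTop (𝓝 0) :=
    squeeze_zero (fun m => (hδ m).le) (fun m => min_le_right _ _)
      tendsto_one_div_add_atTop_nhds_zero_nat
  choose! r hr hrμ using h
  choose u hus hcount hdisj hcover using fun m =>
    exists_countable_disjoint_balls_cover s (fun x => r x (δ m)) fun x hx => hr x hx (δ m) (hδ m)
  have (m : ℕ) : Countable (u m) := (hcount m).to_subtype
  refine (Measure.hausdorffMeasure_le_liminf_tsum d s (l := atTop)
    (fun m => ENNReal.ofReal (10 * δ m)) ?_
    (fun m (x : u m) => closedBall (x : X) (5 * r x (δ m))) ?_ ?_).trans ?_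
  · simpa using ENNReal.tendsto_ofReal (hδ_lim.const_mul 10)
  · refine Eventually.of_forall fun m x => ?_
    have hrx := hr x (hus m x.2) (δ m) (hδ m)
    refine (ediam_closedBall_le_ofReal _ (by linarith [hrx.1])).trans (ENNReal.ofReal_le_ofReal ?_)
    linarith [hrx.2]
  · exact Eventually.of_forall fun m => (hcover m).trans_eq (biUnion_eq_iUnion _ _)
  refine liminf_le_of_frequently_le' (Frequently.of_forall fun m => ?_)
  refine (tsum_ediam_closedBall_rpow_le μ hd (hcount m)
    (fun x hx => Ioc_subset_Ioc_right (min_le_left _ _) (hr x (hus m hx) (δ m) (hδ m)))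
    (hdisj m) fun x hx => hrμ x (hus m hx) (δ m) (hδ m)).trans ?_
  gcongr
  exact thickening_subset_of_subset η (hus m)

theorem summable_exp_neg_sq_mul_pow (n : ℕ) :
    Summable fun j : ℕ => Real.exp (-(j : ℝ) ^ 2 / 4) * ((j : ℝ) + 1) ^ n := by
  have hexp := ((summable_nat_add_iff 1).2 (Real.summable_pow_mul_exp_neg_nat_mul n
    (r := 1 / 4) (by norm_num))).mul_left (Real.exp (1 / 4))
  refine Summable.of_nonneg_of_le (fun j => by positivity) (fun j => ?_) hexp
  have hj : (j : ℝ) ≤ (j : ℝ) ^ 2 := by exact_mod_cast Nat.le_self_pow two_ne_zero j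
  calc Real.exp (-(j : ℝ) ^ 2 / 4) * ((j : ℝ) + 1) ^ n
      ≤ Real.exp (1 / 4 + -(1 / 4) * ((j : ℝ) + 1)) * ((j : ℝ) + 1) ^ n := by
        gcongr
        linarith
    _ = _ := by push_cast; rw [Real.exp_add]; ring

/-- The `j`-th shell `j√t ≤ |y| < (j+1)√t` carries Gaussian weight at most `(4πt)^{-n/2} e^{-j²/4}`
and, under a density bound `μ(B(x,r)) ≤ c r^{n-α}`, mass at most `c ((j+1)√t)^{n-α}`; the powers of
`t` cancel against `t^{α/2}`. -/
noncomputable def heatShellConst (n : ℕ) : ℝ :=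
  (4 * Real.pi) ^ (-(n : ℝ) / 2) * ∑' j : ℕ, Real.exp (-(j : ℝ) ^ 2 / 4) * ((j : ℝ) + 1) ^ n

theorem heatShellConst_pos (n : ℕ) : 0 < heatShellConst n := by
  refine mul_pos (by positivity) (lt_of_lt_of_le ?_ ((summable_exp_neg_sq_mul_pow n).le_tsum 0
    fun j _ => by positivity))
  norm_num

theorem heatK_le_of_mul_sqrt_le {n : ℕ} {y : EuclideanSpace ℝ (Fin n)} {t c : ℝ} (ht : 0 < t)
    (hc : 0 ≤ c) (hy : c * √t ≤ ‖y‖) :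
    heatK n y t ≤ (4 * Real.pi * t) ^ (-(n : ℝ) / 2) * Real.exp (-c ^ 2 / 4) := by
  have hsq : c ^ 2 * t ≤ ‖y‖ ^ 2 := by
    simpa [mul_pow, Real.sq_sqrt ht.le] using pow_le_pow_left₀ (by positivity) hy 2
  unfold heatK
  refine mul_le_mul_of_nonneg_left (Real.exp_le_exp.2 ?_) (by positivity)
  rw [neg_div, neg_div, neg_le_neg_iff, div_le_div_iff₀ (by norm_num) (by positivity)]
  nlinarith

theorem heatK_le_tsum_indicator_shell {n : ℕ} (x ξ : EuclideanSpace ℝ (Fin n)) {t δ : ℝ}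
    (ht : 0 < t) (hξ : ξ ∈ ball x δ) :
    ENNReal.ofReal (heatK n (x - ξ) t) ≤ ∑' j : ℕ, (ball x (min (((j : ℝ) + 1) * √t) δ)).indicator
      (fun _ => ENNReal.ofReal ((4 * Real.pi * t) ^ (-(n : ℝ) / 2) * Real.exp (-(j : ℝ) ^ 2 / 4)))
      ξ := by
  have hst : 0 < √t := Real.sqrt_pos.2 ht
  -- `ξ` lies in the shell `j √t ≤ ‖x - ξ‖ < (j + 1) √t` with `j = ⌊‖x - ξ‖ / √t⌋`.
  set j := ⌊‖x - ξ‖ / √t⌋₊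
  refine le_trans ?_ (ENNReal.le_tsum j)
  rw [indicator_of_mem]
  · refine ENNReal.ofReal_le_ofReal (heatK_le_of_mul_sqrt_le ht j.cast_nonneg ?_)
    rw [← le_div_iff₀ hst]
    exact Nat.floor_le (by positivity)
  · refine lt_min ?_ (mem_ball.1 hξ)
    rw [dist_comm, dist_eq_norm, ← div_lt_iff₀ hst]
    exact Nat.lt_floor_add_one _

theorem rpow_mul_shell_le {n : ℕ} {α t c r : ℝ} (j : ℕ) (hα0 : 0 ≤ α) (hαn : α ≤ n) (ht : 0 < t)
    (hc : 0 ≤ c) (hr0 : 0 ≤ r) (hr : r ≤ ((j : ℝ) + 1) * √t) :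
    t ^ (α / 2) * ((4 * Real.pi * t) ^ (-(n : ℝ) / 2) * Real.exp (-(j : ℝ) ^ 2 / 4) *
      (c * r ^ ((n : ℝ) - α))) ≤
      c * ((4 * Real.pi) ^ (-(n : ℝ) / 2) * (Real.exp (-(j : ℝ) ^ 2 / 4) * ((j : ℝ) + 1) ^ n)) := by
  have hst : 0 < √t := Real.sqrt_pos.2 ht
  have ht_pow : t ^ (α / 2) * (t ^ (-(n : ℝ) / 2) * √t ^ ((n : ℝ) - α)) = 1 := by
    rw [Real.sqrt_eq_rpow, ← Real.rpow_mul ht.le, ← Real.rpow_add ht, ← Real.rpow_add ht]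
    convert Real.rpow_zero t using 2
    ring
  have hj : ((j : ℝ) + 1) ^ ((n : ℝ) - α) ≤ ((j : ℝ) + 1) ^ n := by
    rw [← Real.rpow_natCast]
    exact Real.rpow_le_rpow_of_exponent_le (le_add_of_nonneg_left j.cast_nonneg) (by linarith)
  calc _ ≤ t ^ (α / 2) * ((4 * Real.pi * t) ^ (-(n : ℝ) / 2) * Real.exp (-(j : ℝ) ^ 2 / 4) *
          (c * (((j : ℝ) + 1) * √t) ^ ((n : ℝ) - α))) := by
        gcongr
    _ = c * ((4 * Real.pi) ^ (-(n : ℝ) / 2) *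
          (Real.exp (-(j : ℝ) ^ 2 / 4) * ((j : ℝ) + 1) ^ ((n : ℝ) - α))) *
          (t ^ (α / 2) * (t ^ (-(n : ℝ) / 2) * √t ^ ((n : ℝ) - α))) := by
        rw [Real.mul_rpow (by positivity) ht.le, Real.mul_rpow (by positivity) hst.le]
        ring
    _ ≤ _ := by
        rw [ht_pow, mul_one]
        gcongr

theorem rpow_mul_setLIntegral_ball_heatK_le {n : ℕ} (μ : Measure (EuclideanSpace ℝ (Fin n)))
    (x : EuclideanSpace ℝ (Fin n)) {α δ t c : ℝ} (hα0 : 0 ≤ α) (hαn : α ≤ n) (hδ : 0 < δ)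
    (ht : 0 < t) (hc : 0 ≤ c)
    (hμ : ∀ r ∈ Ioc 0 δ, μ (ball x r) ≤ ENNReal.ofReal (c * r ^ ((n : ℝ) - α))) :
    ENNReal.ofReal (t ^ (α / 2)) * ∫⁻ ξ in ball x δ, ENNReal.ofReal (heatK n (x - ξ) t) ∂μ ≤
      ENNReal.ofReal (c * heatShellConst n) := by
  set a : ℕ → ℝ := fun j => (4 * Real.pi * t) ^ (-(n : ℝ) / 2) * Real.exp (-(j : ℝ) ^ 2 / 4)
  set ρ : ℕ → ℝ := fun j => min (((j : ℝ) + 1) * √t) δ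
  have hρ (j : ℕ) : ρ j ∈ Ioc 0 δ :=
    ⟨lt_min (by have := Real.sqrt_pos.2 ht; positivity) hδ, min_le_right _ _⟩
  have hball : ∫⁻ ξ in ball x δ, ENNReal.ofReal (heatK n (x - ξ) t) ∂μ ≤
      ∑' j, ENNReal.ofReal (a j) * μ (ball x (ρ j)) := by
    calc _ ≤ ∫⁻ ξ, ∑' j, (ball x (ρ j)).indicator (fun _ => ENNReal.ofReal (a j)) ξ ∂μ :=
          (setLIntegral_mono' measurableSet_ball fun ξ hξ =>
            heatK_le_tsum_indicator_shell x ξ ht hξ).trans (setLIntegral_le_lintegral _ _)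
      _ = _ := by
          rw [lintegral_tsum fun j =>
            (measurable_const.indicator measurableSet_ball).aemeasurable]
          simp_rw [lintegral_indicator_const measurableSet_ball]
  calc _ ≤ ∑' j, ENNReal.ofReal (t ^ (α / 2)) * (ENNReal.ofReal (a j) * μ (ball x (ρ j))) := by
        grw [hball, ENNReal.tsum_mul_left]
    _ ≤ ∑' j : ℕ, ENNReal.ofReal (c * ((4 * Real.pi) ^ (-(n : ℝ) / 2) *
          (Real.exp (-(j : ℝ) ^ 2 / 4) * ((j : ℝ) + 1) ^ n))) := by
        refine ENNReal.tsum_le_tsum fun j => ?_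
        grw [hμ _ (hρ j), ← ENNReal.ofReal_mul (by positivity),
          ← ENNReal.ofReal_mul (by positivity)]
        exact ENNReal.ofReal_le_ofReal
          (rpow_mul_shell_le j hα0 hαn ht hc (hρ j).1.le (min_le_left _ _))
    _ = ENNReal.ofReal (c * heatShellConst n) := by
        rw [← ENNReal.ofReal_tsum_of_nonneg (fun j => by positivity)
          (((summable_exp_neg_sq_mul_pow n).mul_left _).mul_left c), tsum_mul_left, tsum_mul_left,
          heatShellConst]

theorem heatK_le_mul_heatK_one {n : ℕ} {y : EuclideanSpace ℝ (Fin n)} {t δ : ℝ} (ht : 0 < t)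
    (ht1 : t ≤ 1) (hδ : 0 ≤ δ) (hy : δ ≤ ‖y‖) :
    heatK n y t ≤ t ^ (-(n : ℝ) / 2) * Real.exp (δ ^ 2 / 4 * (1 - t⁻¹)) * heatK n y 1 := by
  have hsq : δ ^ 2 ≤ ‖y‖ ^ 2 := pow_le_pow_left₀ hδ hy 2
  have hinv : 0 ≤ t⁻¹ - 1 := sub_nonneg.2 (one_le_inv₀ ht |>.2 ht1)
  have hexp : -‖y‖ ^ 2 / (4 * t) ≤ δ ^ 2 / 4 * (1 - t⁻¹) + -‖y‖ ^ 2 / (4 * 1) := by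
    have : -‖y‖ ^ 2 / (4 * t) = -‖y‖ ^ 2 / 4 * t⁻¹ := by field_simp
    rw [this]
    nlinarith [mul_le_mul_of_nonneg_right hsq hinv]
  unfold heatK
  rw [Real.mul_rpow (by positivity) ht.le, mul_one]
  calc (4 * Real.pi) ^ (-(n : ℝ) / 2) * t ^ (-(n : ℝ) / 2) * Real.exp (-‖y‖ ^ 2 / (4 * t))
      ≤ (4 * Real.pi) ^ (-(n : ℝ) / 2) * t ^ (-(n : ℝ) / 2) *
          Real.exp (δ ^ 2 / 4 * (1 - t⁻¹) + -‖y‖ ^ 2 / (4 * 1)) := by gcongr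
    _ = _ := by rw [Real.exp_add]; ring

theorem tendsto_rpow_mul_exp_mul_one_sub_inv (p : ℝ) {b : ℝ} (hb : 0 < b) :
    Tendsto (fun t : ℝ => t ^ p * Real.exp (b * (1 - t⁻¹))) (𝓝[>] 0) (𝓝 0) := by
  have h := ((tendsto_rpow_mul_exp_neg_mul_atTop_nhds_zero (-p) b hb).const_mul
    (Real.exp b)).comp tendsto_inv_nhdsGT_zero
  rw [mul_zero] at h
  refine h.congr' (eventually_mem_nhdsWithin.mono fun t (ht : 0 < t) => ?_)
  simp only [Function.comp, Real.inv_rpow ht.le, ← Real.rpow_neg ht.le, neg_neg]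
  rw [mul_sub, mul_one, sub_eq_add_neg, Real.exp_add, neg_mul]
  ring

theorem rpow_mul_setLIntegral_compl_ball_heatK_le {n : ℕ} (μ : Measure (EuclideanSpace ℝ (Fin n)))
    (x : EuclideanSpace ℝ (Fin n)) {α δ t : ℝ} (hδ : 0 ≤ δ) (ht : 0 < t) (ht1 : t ≤ 1) :
    ENNReal.ofReal (t ^ (α / 2)) * ∫⁻ ξ in (ball x δ)ᶜ, ENNReal.ofReal (heatK n (x - ξ) t) ∂μ ≤
      ENNReal.ofReal (t ^ ((α - n) / 2) * Real.exp (δ ^ 2 / 4 * (1 - t⁻¹))) *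
        ∫⁻ ξ, ENNReal.ofReal (heatK n (x - ξ) 1) ∂μ := by
  rw [← lintegral_const_mul' _ _ ofReal_ne_top, ← lintegral_const_mul' _ _ ofReal_ne_top]
  refine (setLIntegral_mono' measurableSet_ball.compl fun ξ hξ => ?_).trans
    (setLIntegral_le_lintegral _ _)
  have hy : δ ≤ ‖x - ξ‖ := by
    rw [norm_sub_rev]
    simpa [dist_eq_norm] using hξ
  rw [← ENNReal.ofReal_mul (by positivity), ← ENNReal.ofReal_mul (by positivity)]
  refine ENNReal.ofReal_le_ofReal ?_
  calc t ^ (α / 2) * heatK n (x - ξ) t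
      ≤ t ^ (α / 2) * (t ^ (-(n : ℝ) / 2) * Real.exp (δ ^ 2 / 4 * (1 - t⁻¹)) *
          heatK n (x - ξ) 1) := by
        gcongr
        exact heatK_le_mul_heatK_one ht ht1 hδ hy
    _ = _ := by
        rw [← mul_assoc, ← mul_assoc, ← Real.rpow_add ht]
        ring_nf

theorem limsup_rpow_mul_lintegral_heatK_le {n : ℕ} (μ : Measure (EuclideanSpace ℝ (Fin n)))
    (x : EuclideanSpace ℝ (Fin n)) {α δ c : ℝ} (hα0 : 0 ≤ α) (hαn : α ≤ n) (hδ : 0 < δ)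
    (hc : 0 ≤ c) (hu : ∫⁻ ξ, ENNReal.ofReal (heatK n (x - ξ) 1) ∂μ ≠ ⊤)
    (hμ : ∀ r ∈ Ioc 0 δ, μ (ball x r) ≤ ENNReal.ofReal (c * r ^ ((n : ℝ) - α))) :
    limsup (fun t : ℝ => ENNReal.ofReal (t ^ (α / 2)) *
      ∫⁻ ξ, ENNReal.ofReal (heatK n (x - ξ) t) ∂μ) (𝓝[>] 0) ≤
      ENNReal.ofReal (c * heatShellConst n) := by
  set g : ℝ → ℝ := fun t => t ^ ((α - n) / 2) * Real.exp (δ ^ 2 / 4 * (1 - t⁻¹))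
  have hg : Tendsto (fun t => ENNReal.ofReal (g t) * ∫⁻ ξ, ENNReal.ofReal (heatK n (x - ξ) 1) ∂μ)
      (𝓝[>] 0) (𝓝 0) := by
    simpa using ENNReal.Tendsto.mul_const (ENNReal.tendsto_ofReal
      (tendsto_rpow_mul_exp_mul_one_sub_inv _ (by positivity))) (Or.inr hu)
  have hsplit : ∀ᶠ t in 𝓝[>] 0, ENNReal.ofReal (t ^ (α / 2)) *
      ∫⁻ ξ, ENNReal.ofReal (heatK n (x - ξ) t) ∂μ ≤ ENNReal.ofReal (c * heatShellConst n) +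
        ENNReal.ofReal (g t) * ∫⁻ ξ, ENNReal.ofReal (heatK n (x - ξ) 1) ∂μ := by
    filter_upwards [Ioc_mem_nhdsGT one_pos] with t ht
    rw [← lintegral_add_compl _ (measurableSet_ball (x := x) (ε := δ)), mul_add]
    exact add_le_add (rpow_mul_setLIntegral_ball_heatK_le μ x hα0 hαn hδ ht.1 hc hμ)
      (rpow_mul_setLIntegral_compl_ball_heatK_le μ x hδ.le ht.1 ht.2)
  calc _ ≤ limsup (fun t => ENNReal.ofReal (c * heatShellConst n) +
        ENNReal.ofReal (g t) * ∫⁻ ξ, ENNReal.ofReal (heatK n (x - ξ) 1) ∂μ) (𝓝[>] 0) :=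
        limsup_le_limsup hsplit
    _ = ENNReal.ofReal (c * heatShellConst n) := by
        simpa using (tendsto_const_nhds.add hg).limsup_eq

theorem exists_rpow_le_measure_ball_of_lt_limsup {n : ℕ} (μ : Measure (EuclideanSpace ℝ (Fin n)))
    (x : EuclideanSpace ℝ (Fin n)) {α k δ : ℝ} (hα0 : 0 ≤ α) (hαn : α ≤ n) (hk : 0 < k)
    (hδ : 0 < δ) (hu : ∫⁻ ξ, ENNReal.ofReal (heatK n (x - ξ) 1) ∂μ ≠ ⊤)
    (hx : ENNReal.ofReal k < limsup (fun t : ℝ => ENNReal.ofReal (t ^ (α / 2)) *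
      ∫⁻ ξ, ENNReal.ofReal (heatK n (x - ξ) t) ∂μ) (𝓝[>] 0)) :
    ∃ r ∈ Ioc 0 δ,
      ENNReal.ofReal r ^ ((n : ℝ) - α) ≤ ENNReal.ofReal (heatShellConst n / k) * μ (ball x r) := by
  have hK := heatShellConst_pos n
  by_contra! hsmall
  refine hx.not_ge ((limsup_rpow_mul_lintegral_heatK_le μ x hα0 hαn hδ
    (c := k / heatShellConst n) (by positivity) hu fun r hr => ?_).trans_eq ?_)
  · calc μ (ball x r)
        = ENNReal.ofReal (k / heatShellConst n) *
            (ENNReal.ofReal (heatShellConst n / k) * μ (ball x r)) := by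
          rw [← mul_assoc, ← ENNReal.ofReal_mul (by positivity),
            show k / heatShellConst n * (heatShellConst n / k) = 1 by field_simp,
            ENNReal.ofReal_one, one_mul]
      _ ≤ ENNReal.ofReal (k / heatShellConst n) * ENNReal.ofReal r ^ ((n : ℝ) - α) := by
          gcongr
          exact (hsmall r hr).le
      _ = _ := by
          rw [ENNReal.ofReal_rpow_of_nonneg hr.1.le (sub_nonneg.2 hαn),
            ← ENNReal.ofReal_mul (by positivity)]
  · rw [div_mul_cancel₀ _ hK.ne']

theorem stmt15 (n : ℕ) (α : ℝ) (hα : α ∈ Ioo (0 : ℝ) n) :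
    ∃ C : ℝ, 0 < C ∧
      ∀ μ : Measure (EuclideanSpace ℝ (Fin n)),
        (∀ (x : EuclideanSpace ℝ (Fin n)) (t : ℝ), 0 < t →
          (∫⁻ ξ, ENNReal.ofReal (heatK n (x - ξ) t) ∂μ) ≠ ⊤) →
        ∀ R : ℝ, 0 < R → ∀ k : ℕ, 0 < k →
          μH[(n : ℝ) - α] {x : EuclideanSpace ℝ (Fin n) |
              x ∈ ball (0 : EuclideanSpace ℝ (Fin n)) R ∧
                (k : ℝ≥0∞) < limsup (fun t : ℝ =>
                    ENNReal.ofReal (t ^ (α / 2)) *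
                      ∫⁻ ξ, ENNReal.ofReal (heatK n (x - ξ) t) ∂μ)
                  (nhdsWithin 0 (Ioi 0))} ≤
            ENNReal.ofReal C * μ (ball 0 (R + 1)) / (k : ℝ≥0∞) := by
  have hd : 0 < (n : ℝ) - α := sub_pos.2 hα.2
  refine ⟨10 ^ ((n : ℝ) - α) * heatShellConst n,
    by have := heatShellConst_pos n; positivity, fun μ hu R _ k hk => ?_⟩
  have hk' : (0 : ℝ) < k := Nat.cast_pos.2 hk
  refine (hausdorffMeasure_le_mul_measure_thickening μ hd.le one_pos fun x hx δ hδ =>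
    exists_rpow_le_measure_ball_of_lt_limsup μ x hα.1.le hα.2.le hk' hδ (hu x 1 one_pos)
      (by rw [ENNReal.ofReal_natCast]; exact hx.2)).trans ?_
  calc _ ≤ 10 ^ ((n : ℝ) - α) * ENNReal.ofReal (heatShellConst n / k) * μ (ball 0 (R + 1)) := by
        gcongr
        refine (thickening_subset_of_subset 1 fun x hx => hx.1).trans ?_
        exact (Metric.thickening_ball 0 1 R).trans_eq (by rw [add_comm])
    _ = _ := by
        rw [ENNReal.ofReal_mul (by positivity), ← ENNReal.ofReal_rpow_of_pos (by norm_num),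
          ENNReal.ofReal_div_of_pos hk', ENNReal.ofReal_natCast, ENNReal.ofReal_ofNat,
          div_eq_mul_inv, div_eq_mul_inv]
        ring
end
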